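/- Consider the system ė_x = −k_x e_x + ω_d(t) e_y + 0, ė_y = −ω_d(t) e_x + v̄(t) (input v̄ in the second channel), under the same hypotheses and with the same W₁ as in the unperturbed case. Then d/dt W₁(t, e(t)) ≤ −(μ/(4T))|e(t)|² + (Tβ²/μ) v̄(t)², where β := 1 + 2ω̄²T + α + ω̄. Consequently V₁ := (2T/μ)W₁ satisfies V̇₁ ≤ −(1/2)|e|² + (γ₁²/2) v̄² with γ₁ := 2Tβ/μ, i.e., the system has L₂-gain at most γ₁ from v̄ to e. -/

import Mathlib

open MeasureTheory intervalIntegral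

/-!
Differentiating `W₁` along a trajectory, the averaging weight `Υ` contributes
`-(1/T) ∫_t^{t+T} ω_d² ≤ -μ/T` to the coefficient of `|e|²` (persistent excitation), and the
choice of `α` makes this dominate the indefinite terms of the unperturbed system, leaving
`-(μ/(2T))|e|²`. The input enters only through `((Υ + α) e_y - ω_d e_x) v̄`, whose coefficients
are bounded by `1 + 2ω̄²T + α` and `ω̄`; Young's inequality absorbs it into half of the decrease.
-/

lemma mul_le_young {ε : ℝ} (hε : 0 < ε) (p q : ℝ) : p * q ≤ ε * p ^ 2 + q ^ 2 / (4 * ε) := by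
  rw [← sub_nonneg]
  have key : ε * p ^ 2 + q ^ 2 / (4 * ε) - p * q = (2 * ε * p - q) ^ 2 / (4 * ε) := by
    field_simp
    ring
  rw [key]
  positivity

lemma hasDerivAt_integral_integral {g : ℝ → ℝ} (hg : Continuous g) (T t : ℝ) :
    HasDerivAt (fun u => ∫ m in u..(u + T), ∫ s in u..m, g s)
      ((∫ s in t..(t + T), g s) - T * g t) t := by
  set P : ℝ → ℝ := fun x => ∫ s in (0 : ℝ)..x, g s
  have hP : ∀ x, HasDerivAt P (g x) x := fun x => (hg.integral_hasStrictDerivAt 0 x).hasDerivAt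
  have hPc : Continuous P := continuous_iff_continuousAt.2 fun x => (hP x).continuousAt
  have hPsub : ∀ a b, ∫ s in a..b, g s = P b - P a := fun a b =>
    (integral_interval_sub_left (hg.intervalIntegrable 0 b) (hg.intervalIntegrable 0 a)).symm
  set Q : ℝ → ℝ := fun x => ∫ s in (0 : ℝ)..x, P s
  have hQ : ∀ x, HasDerivAt Q (P x) x := fun x => (hPc.integral_hasStrictDerivAt 0 x).hasDerivAt
  have hQsub : ∀ a b, ∫ s in a..b, P s = Q b - Q a := fun a b =>
    (integral_interval_sub_left (hPc.intervalIntegrable 0 b) (hPc.intervalIntegrable 0 a)).symm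
  have primitive_form : (fun u => ∫ m in u..(u + T), ∫ s in u..m, g s) =
      fun u => Q (u + T) - Q u - T * P u := by
    funext u
    simp only [hPsub u]
    rw [integral_sub (hPc.intervalIntegrable _ _) intervalIntegrable_const, hQsub,
      intervalIntegral.integral_const, smul_eq_mul, add_sub_cancel_left]
  rw [primitive_form, hPsub]
  exact ((HasDerivAt.comp_add_const t T (hQ (t + T))).sub (hQ t)).sub ((hP t).const_mul T)

lemma integral_integral_nonneg {g : ℝ → ℝ} (hg : ∀ s, 0 ≤ g s) {T : ℝ} (hT : 0 ≤ T) (t : ℝ) :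
    0 ≤ ∫ m in t..(t + T), ∫ s in t..m, g s :=
  integral_nonneg (by linarith) fun _ hm => integral_nonneg hm.1 fun s _ => hg s

lemma integral_integral_le {g : ℝ → ℝ} {c : ℝ} (hg : ∀ s, |g s| ≤ c) {T : ℝ} (hT : 0 ≤ T)
    (t : ℝ) : ∫ m in t..(t + T), ∫ s in t..m, g s ≤ c * T * T := by
  have hc : 0 ≤ c := (abs_nonneg _).trans (hg 0)
  have inner : ∀ m ∈ Set.uIoc t (t + T), ‖∫ s in t..m, g s‖ ≤ c * T := by
    intro m hm
    rw [Set.uIoc_of_le (by linarith)] at hm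
    refine (norm_integral_le_of_norm_le_const fun s _ => hg s).trans ?_
    rw [abs_of_nonneg (by linarith [hm.1])]
    exact mul_le_mul_of_nonneg_left (by linarith [hm.2]) hc
  have outer := norm_integral_le_of_norm_le_const inner
  rw [add_sub_cancel_left, abs_of_nonneg hT] at outer
  exact (le_abs_self _).trans outer

lemma weight_mem_Icc {g : ℝ → ℝ} {c T : ℝ} (hg₀ : ∀ s, 0 ≤ g s) (hg : ∀ s, g s ≤ c)
    (hT : 0 < T) (t : ℝ) :
    1 + 2 * c * T - (2 / T) * ∫ m in t..(t + T), ∫ s in t..m, g s ∈ Set.Icc 1 (1 + 2 * c * T) := by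
  have hupper := integral_integral_le (fun s => (abs_of_nonneg (hg₀ s)).trans_le (hg s)) hT.le t
  have hscaled := mul_le_mul_of_nonneg_left hupper (by positivity : 0 ≤ 2 / T)
  have hcancel : 2 / T * (c * T * T) = 2 * c * T := by field_simp
  have hlower := mul_nonneg (by positivity : 0 ≤ 2 / T) (integral_integral_nonneg hg₀ hT.le t)
  constructor <;> linarith

lemma hasDerivAt_quadratic_sub_cross {U ω x y : ℝ → ℝ} {U' ω' x' y' : ℝ} (α : ℝ) {t : ℝ}
    (hU : HasDerivAt U U' t) (hω : HasDerivAt ω ω' t) (hx : HasDerivAt x x' t)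
    (hy : HasDerivAt y y' t) :
    HasDerivAt (fun s => (1 / 2) * (U s + α) * (x s ^ 2 + y s ^ 2) - ω s * x s * y s)
      ((1 / 2) * U' * (x t ^ 2 + y t ^ 2) + (U t + α) * (x t * x' + y t * y')
        - (ω' * x t * y t + ω t * (x' * y t + x t * y'))) t := by
  have h := (((hU.add_const α).const_mul (1 / 2)).mul ((hx.pow 2).add (hy.pow 2))).sub
    ((hω.mul hx).mul hy)
  refine h.congr_deriv ?_
  simp only [Pi.mul_apply, Pi.add_apply, Pi.pow_apply]
  push_cast
  ring

lemma sq_mul_sub_le_of_abs_le {k w w' c : ℝ} (hk : 0 ≤ k) (hw : |w| ≤ c) (hw' : |w'| ≤ c) :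
    (k * w - w') ^ 2 ≤ (1 + k) ^ 2 * c ^ 2 := by
  rw [← mul_pow]
  refine sq_le_sq' ?_ ?_ <;>
    nlinarith [abs_le.1 hw, abs_le.1 hw', mul_le_mul_of_nonneg_left (abs_le.1 hw).1 hk,
      mul_le_mul_of_nonneg_left (abs_le.1 hw).2 hk]

/-- The rate of change of `W₁` along the unperturbed system, with `I = ∫_t^{t+T} ω_d²` and
`u = Υ t`. -/
lemma nominal_derivative_le {kx ωbar μ T α I u w w' x y : ℝ} (hkx : 0 < kx) (hT : 0 < T)
    (hμ : 0 < μ) (hw : |w| ≤ ωbar) (hw' : |w'| ≤ ωbar) (hI : μ ≤ I) (hu : 0 ≤ u)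
    (hα : (2 * ωbar ^ 2 / kx) * (1 + (T / (4 * μ)) * (1 + kx) ^ 2) ≤ α) :
    -(I / T) * (x ^ 2 + y ^ 2) + 2 * w ^ 2 * x ^ 2 - (u + α) * kx * x ^ 2
        + (kx * w - w') * (x * y) ≤ -(μ / (2 * T)) * (x ^ 2 + y ^ 2) := by
  have hε : 0 < μ / (2 * T) := by positivity
  have young := mul_le_young hε y ((kx * w - w') * x)
  have hcoef := sq_mul_sub_le_of_abs_le hkx.le hw hw'
  have hw2 : w ^ 2 ≤ ωbar ^ 2 := sq_le_sq.2 (hw.trans (le_abs_self _))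
  have hαkx : 2 * ωbar ^ 2 + T / (2 * μ) * (1 + kx) ^ 2 * ωbar ^ 2 ≤ α * kx := by
    rw [div_mul_eq_mul_div, div_le_iff₀ hkx] at hα
    have expand : 2 * ωbar ^ 2 * (1 + T / (4 * μ) * (1 + kx) ^ 2) =
        2 * ωbar ^ 2 + T / (2 * μ) * (1 + kx) ^ 2 * ωbar ^ 2 := by
      field_simp
      ring
    linarith
  have hxcoef : 2 * w ^ 2 - (u + α) * kx + T / (2 * μ) * (kx * w - w') ^ 2 ≤ 0 := by
    nlinarith [mul_le_mul_of_nonneg_left hcoef (by positivity : 0 ≤ T / (2 * μ)),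
      mul_nonneg hu hkx.le]
  have hdecay : -(I / T) * (x ^ 2 + y ^ 2) ≤ -(μ / T) * (x ^ 2 + y ^ 2) := by
    gcongr
  have hyoung : (kx * w - w') * (x * y) ≤
      μ / (2 * T) * y ^ 2 + T / (2 * μ) * (kx * w - w') ^ 2 * x ^ 2 := by
    convert young using 1
    · ring
    · field_simp
      ring
  have hx2 : (2 * w ^ 2 - (u + α) * kx + T / (2 * μ) * (kx * w - w') ^ 2) * x ^ 2 ≤ 0 :=
    mul_nonpos_of_nonpos_of_nonneg hxcoef (sq_nonneg x)
  have hsplit : μ / T = μ / (2 * T) + μ / (2 * T) := by field_simp; ring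
  nlinarith [mul_nonneg hε.le (sq_nonneg x)]

lemma input_term_le {a b A B ε : ℝ} (hε : 0 < ε) (ha : |a| ≤ A) (hb : |b| ≤ B) (x y v : ℝ) :
    a * y * v - b * x * v ≤ ε * (x ^ 2 + y ^ 2) + (A + B) ^ 2 / (4 * ε) * v ^ 2 := by
  have hA : 0 ≤ A := (abs_nonneg a).trans ha
  have hB : 0 ≤ B := (abs_nonneg b).trans hb
  have hy := mul_le_young hε y (a * v)
  have hx := mul_le_young hε x (-(b * v))
  have hab : a ^ 2 + b ^ 2 ≤ (A + B) ^ 2 := by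
    nlinarith [sq_le_sq.2 (ha.trans (le_abs_self A)), sq_le_sq.2 (hb.trans (le_abs_self B)),
      mul_nonneg hA hB]
  have hv : (a ^ 2 + b ^ 2) * v ^ 2 / (4 * ε) ≤ (A + B) ^ 2 / (4 * ε) * v ^ 2 := by
    rw [div_mul_eq_mul_div]
    gcongr
  have expand : (a * v) ^ 2 / (4 * ε) + (-(b * v)) ^ 2 / (4 * ε) =
      (a ^ 2 + b ^ 2) * v ^ 2 / (4 * ε) := by ring
  nlinarith

lemma l2Gain_dissipation_of_le {T μ β γ d E v : ℝ} (hT : 0 < T) (hμ : 0 < μ)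
    (hγ : γ = 2 * T * β / μ) (hd : d ≤ -(μ / (4 * T)) * E + (T * β ^ 2 / μ) * v ^ 2) :
    (2 * T / μ) * d ≤ -(1 / 2) * E + (γ ^ 2 / 2) * v ^ 2 := by
  calc (2 * T / μ) * d ≤ (2 * T / μ) * (-(μ / (4 * T)) * E + (T * β ^ 2 / μ) * v ^ 2) := by
        gcongr
    _ = -(1 / 2) * E + (γ ^ 2 / 2) * v ^ 2 := by
        rw [hγ]
        field_simp
        ring

theorem W1_ISS_bound
    (ωd vbar : ℝ → ℝ) (kx ωbar μ T α β γ₁ : ℝ)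
    (hkx : 0 < kx) (hT : 0 < T) (hμ : 0 < μ)
    (hC1 : ContDiff ℝ 1 ωd)
    (hωd : ∀ t : ℝ, |ωd t| ≤ ωbar)
    (hωd' : ∀ t : ℝ, |deriv ωd t| ≤ ωbar)
    (hPE : ∀ t : ℝ, 0 ≤ t → μ ≤ ∫ s in t..(t + T), (ωd s) ^ 2)
    (hα : max ωbar ((2 * ωbar ^ 2 / kx) * (1 + (T / (4 * μ)) * (1 + kx) ^ 2)) ≤ α)
    (hβ : β = 1 + 2 * ωbar ^ 2 * T + α + ωbar)
    (hγ₁ : γ₁ = 2 * T * β / μ)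
    (Υ : ℝ → ℝ)
    (hΥ : ∀ t : ℝ, Υ t = 1 + 2 * ωbar ^ 2 * T -
      (2 / T) * ∫ m in t..(t + T), (∫ s in t..m, (ωd s) ^ 2))
    (W₁ : ℝ → ℝ → ℝ → ℝ)
    (hW₁ : ∀ t exv eyv : ℝ,
      W₁ t exv eyv = (1 / 2) * (Υ t + α) * (exv ^ 2 + eyv ^ 2) - ωd t * exv * eyv)
    (ex ey : ℝ → ℝ)
    (hex : ∀ t : ℝ, HasDerivAt ex (-kx * ex t + ωd t * ey t) t)
    (hey : ∀ t : ℝ, HasDerivAt ey (-(ωd t) * ex t + vbar t) t) :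
    ∀ t : ℝ, 0 ≤ t → ∃ d : ℝ,
      HasDerivAt (fun s => W₁ s (ex s) (ey s)) d t ∧
      d ≤ -(μ / (4 * T)) * ((ex t) ^ 2 + (ey t) ^ 2) + (T * β ^ 2 / μ) * (vbar t) ^ 2 ∧
      (2 * T / μ) * d ≤ -(1 / 2) * ((ex t) ^ 2 + (ey t) ^ 2) + (γ₁ ^ 2 / 2) * (vbar t) ^ 2 := by
  intro t ht
  have hJ := hasDerivAt_integral_integral (g := fun s => ωd s ^ 2) (hC1.continuous.pow 2) T t
  have hΥ' := (hJ.const_mul (2 / T)).const_sub (1 + 2 * ωbar ^ 2 * T)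
    |>.congr_of_eventuallyEq (.of_forall hΥ)
  have hW := (hasDerivAt_quadratic_sub_cross α hΥ'
    (hC1.differentiable one_ne_zero t).hasDerivAt (hex t) (hey t)).congr_of_eventuallyEq
    (.of_forall fun s => hW₁ s (ex s) (ey s))
  obtain ⟨hΥ_ge, hΥ_le⟩ : Υ t ∈ Set.Icc 1 (1 + 2 * ωbar ^ 2 * T) := hΥ t ▸ weight_mem_Icc
    (fun s => sq_nonneg (ωd s)) (fun s => sq_abs (ωd s) ▸ pow_le_pow_left₀ (abs_nonneg _) (hωd s) 2)
    hT t
  have hα_nonneg : 0 ≤ α := ((abs_nonneg _).trans (hωd 0)).trans ((le_max_left _ _).trans hα)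
  have hnominal := nominal_derivative_le (x := ex t) (y := ey t) hkx hT hμ (hωd t) (hωd' t)
    (hPE t ht) (zero_le_one.trans hΥ_ge) ((le_max_right _ _).trans hα)
  have hinput := input_term_le (by positivity : 0 < μ / (4 * T))
    (abs_le.2 ⟨by linarith, by linarith⟩ : |Υ t + α| ≤ 1 + 2 * ωbar ^ 2 * T + α) (hωd t)
    (ex t) (ey t) (vbar t)
  refine ⟨_, hW, ?_⟩
  refine (fun hd => ⟨hd, l2Gain_dissipation_of_le hT hμ hγ₁ hd⟩) ?_
  calc _ = (-((∫ s in t..(t + T), ωd s ^ 2) / T) * (ex t ^ 2 + ey t ^ 2)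
          + 2 * ωd t ^ 2 * ex t ^ 2 - (Υ t + α) * kx * ex t ^ 2
          + (kx * ωd t - deriv ωd t) * (ex t * ey t))
        + ((Υ t + α) * ey t * vbar t - ωd t * ex t * vbar t) := by
        field_simp
        ring
    _ ≤ -(μ / (2 * T)) * (ex t ^ 2 + ey t ^ 2) + (μ / (4 * T) * (ex t ^ 2 + ey t ^ 2)
          + (1 + 2 * ωbar ^ 2 * T + α + ωbar) ^ 2 / (4 * (μ / (4 * T))) * vbar t ^ 2) :=
        add_le_add hnominal hinput
    _ = _ := by
        rw [hβ]
        field_simp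
        ring
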